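/- arXiv:2509.16683 — 3 statements merged into one kernel-verified Lean document; each statement's English description precedes it below -/
import Mathlib

section
/- Let C be a triangulated category with a bounded weight structure w and F : C → D an exact (triangulated) functor to a triangulated category with weight structure. If F sends the heart C^♥_w into D^♥_w, then F is weight-exact, i.e., F(C_{w≤0}) ⊆ D_{w≤0} and F(C_{w≥0}) ⊆ D_{w≥0}. -/
/-!
Writing `C_{w≥a} ∩ C_{w≤b}` for the objects of weights in `[a, b]`, one shows by induction on
`b - a` that `F` maps it into `D_{w≥a} ∩ D_{w≤b}`. After a shift we may take `a = 0`; a weight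
decomposition `A → X → B → A⟦1⟧` of `X` then has `A` in the heart and `B` of weights in
`[1, b]`, so `F A` is in the heart by hypothesis, `F B` has weights in `[1, b]` by induction,
and `F X` follows because both halves of a weight structure are extension-closed.
Boundedness puts every object of `C_{w≤0}` in some `[a, 0]` and every object of `C_{w≥0}` in
some `[0, b]`.
-/

open CategoryTheory Category Limits Pretriangulated

universe v u

variable (C : Type u) [Category.{v} C] [Preadditive C] [HasZeroObject C] [HasShift C ℤ]
  [∀ n : ℤ, (shiftFunctor C n).Additive] [Pretriangulated C]

/-- A weight structure on a (pre)triangulated category `C`, given by a pair of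
retract-closed, isomorphism-closed full subcategories `C_{w≤0}` (the predicate `le0`)
and `C_{w≥0}` (the predicate `ge0`) satisfying semi-invariance, weak orthogonality
and the existence of weight decompositions. -/
structure WeightStructure where
  /-- membership in `C_{w≤0}` -/
  le0 : C → Prop
  /-- membership in `C_{w≥0}` -/
  ge0 : C → Prop
  le0_iso : ∀ {X Y : C}, (X ≅ Y) → le0 X → le0 Y
  ge0_iso : ∀ {X Y : C}, (X ≅ Y) → ge0 X → ge0 Y
  le0_retract : ∀ {X Y : C} (i : X ⟶ Y) (r : Y ⟶ X), i ≫ r = 𝟙 X → le0 Y → le0 X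
  ge0_retract : ∀ {X Y : C} (i : X ⟶ Y) (r : Y ⟶ X), i ≫ r = 𝟙 X → ge0 Y → ge0 X
  ge0_shift : ∀ X : C, ge0 X → ge0 (X⟦(1 : ℤ)⟧)
  le0_shift : ∀ X : C, le0 X → le0 (X⟦(-1 : ℤ)⟧)
  orth : ∀ {X Y : C}, le0 X → ge0 Y → ∀ f : X ⟶ Y⟦(1 : ℤ)⟧, f = 0
  decomp : ∀ X : C, ∃ (A B : C) (f : A ⟶ X) (g : X ⟶ B) (h : B ⟶ A⟦(1 : ℤ)⟧),
    le0 A ∧ ge0 (B⟦(-1 : ℤ)⟧) ∧ (Triangle.mk f g h ∈ distTriang C)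

variable {C}

variable {D : Type u} [Category.{v} D] [Preadditive D] [HasZeroObject D] [HasShift D ℤ]
  [∀ n : ℤ, (shiftFunctor D n).Additive] [Pretriangulated D]

namespace WeightStructure

variable (w : WeightStructure C)

/-- `X ∈ C_{w≤n}`: the shift `⟦1⟧` raises weights by one. -/
def IsLE (X : C) (n : ℤ) : Prop := w.le0 (X⟦-n⟧)

/-- `X ∈ C_{w≥n}`. -/
def IsGE (X : C) (n : ℤ) : Prop := w.ge0 (X⟦-n⟧)

variable {w}

lemma isLE_iff_of_iso {X Y : C} (e : X ≅ Y) (n : ℤ) : w.IsLE X n ↔ w.IsLE Y n :=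
  ⟨w.le0_iso ((shiftFunctor C (-n)).mapIso e),
    w.le0_iso ((shiftFunctor C (-n)).mapIso e.symm)⟩

lemma isGE_iff_of_iso {X Y : C} (e : X ≅ Y) (n : ℤ) : w.IsGE X n ↔ w.IsGE Y n :=
  ⟨w.ge0_iso ((shiftFunctor C (-n)).mapIso e),
    w.ge0_iso ((shiftFunctor C (-n)).mapIso e.symm)⟩

lemma isLE_zero_iff (X : C) : w.IsLE X 0 ↔ w.le0 X := by
  rw [IsLE, neg_zero]
  exact ⟨w.le0_iso ((shiftFunctorZero C ℤ).app X), w.le0_iso ((shiftFunctorZero C ℤ).app X).symm⟩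

lemma isGE_zero_iff (X : C) : w.IsGE X 0 ↔ w.ge0 X := by
  rw [IsGE, neg_zero]
  exact ⟨w.ge0_iso ((shiftFunctorZero C ℤ).app X), w.ge0_iso ((shiftFunctorZero C ℤ).app X).symm⟩

lemma isLE_shift_iff (X : C) (n a n' : ℤ) (h : n + a = n') : w.IsLE (X⟦a⟧) n' ↔ w.IsLE X n :=
  ⟨w.le0_iso ((shiftFunctorAdd' C a (-n') (-n) (by omega)).app X).symm,
    w.le0_iso ((shiftFunctorAdd' C a (-n') (-n) (by omega)).app X)⟩

lemma isGE_shift_iff (X : C) (n a n' : ℤ) (h : n + a = n') : w.IsGE (X⟦a⟧) n' ↔ w.IsGE X n :=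
  ⟨w.ge0_iso ((shiftFunctorAdd' C a (-n') (-n) (by omega)).app X).symm,
    w.ge0_iso ((shiftFunctorAdd' C a (-n') (-n) (by omega)).app X)⟩

lemma isLE_iff_of_iso_shift {X Y : C} {n a n' : ℤ} (e : Y ≅ X⟦a⟧) (h : n + a = n') :
    w.IsLE Y n' ↔ w.IsLE X n :=
  (isLE_iff_of_iso e n').trans (isLE_shift_iff X n a n' h)

lemma isGE_iff_of_iso_shift {X Y : C} {n a n' : ℤ} (e : Y ≅ X⟦a⟧) (h : n + a = n') :
    w.IsGE Y n' ↔ w.IsGE X n :=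
  (isGE_iff_of_iso e n').trans (isGE_shift_iff X n a n' h)

lemma isLE_of_le {X : C} {p q : ℤ} (h : w.IsLE X p) (hpq : p ≤ q) : w.IsLE X q := by
  induction q, hpq using Int.leInduction with
  | base => exact h
  | succ m _ hm =>
    rw [← isLE_shift_iff X (m + 1) (-m) 1 (by ring)]
    rw [← isLE_shift_iff X m (-m) 0 (by ring), isLE_zero_iff] at hm
    exact w.le0_shift _ hm

lemma isGE_of_ge {X : C} {p q : ℤ} (h : w.IsGE X q) (hpq : p ≤ q) : w.IsGE X p := by
  induction p, hpq using Int.leInductionDown with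
  | base => exact h
  | pred m _ hm =>
    rw [← isGE_shift_iff X (m - 1) (-m) (-1) (by ring), IsGE, neg_neg]
    rw [← isGE_shift_iff X m (-m) 0 (by ring), isGE_zero_iff] at hm
    exact w.ge0_shift _ hm

lemma hom_eq_zero_of_le0_of_isGE_one {X Y : C} (hX : w.le0 X) (hY : w.IsGE Y 1) (f : X ⟶ Y) :
    f = 0 := by
  have e := (shiftFunctorCompIsoId C (-1 : ℤ) 1 (by norm_num)).app Y
  rw [← cancel_mono e.inv, zero_comp]
  exact w.orth hX hY _

lemma le0_of_hom_eq_zero {X : C} (h : ∀ Y : C, w.IsGE Y 1 → ∀ f : X ⟶ Y, f = 0) : w.le0 X := by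
  obtain ⟨A, B, f, g, _, hA, hB, hT⟩ := w.decomp X
  obtain ⟨s, hs⟩ := Triangle.coyoneda_exact₂ _ hT (𝟙 X) ((id_comp g).trans (h B hB g))
  exact w.le0_retract s f hs.symm hA

lemma ge0_of_hom_eq_zero {X : C} (h : ∀ A : C, w.le0 A → ∀ f : A ⟶ X⟦(1 : ℤ)⟧, f = 0) :
    w.ge0 X := by
  obtain ⟨A, B, f, g, _, hA, hB, hT⟩ := w.decomp (X⟦(1 : ℤ)⟧)
  obtain ⟨r, hr⟩ : ∃ r : B ⟶ X⟦(1 : ℤ)⟧, 𝟙 _ = g ≫ r :=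
    Triangle.yoneda_exact₂ _ hT (𝟙 _) ((comp_id f).trans (h A hA f))
  have hretract : g⟦(-1 : ℤ)⟧' ≫ r⟦(-1 : ℤ)⟧' = 𝟙 _ := by
    rw [← Functor.map_comp, ← hr]
    exact (shiftFunctor C (-1 : ℤ)).map_id _
  exact w.ge0_iso ((shiftFunctorCompIsoId C (1 : ℤ) (-1) (by norm_num)).app X)
    (w.ge0_retract _ _ hretract hB)

lemma le0₂ (T : Triangle C) (hT : T ∈ distTriang C) (h₁ : w.le0 T.obj₁) (h₃ : w.le0 T.obj₃) :
    w.le0 T.obj₂ := by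
  refine le0_of_hom_eq_zero fun Y hY g => ?_
  obtain ⟨φ, rfl⟩ := T.yoneda_exact₂ hT g (hom_eq_zero_of_le0_of_isGE_one h₁ hY _)
  rw [hom_eq_zero_of_le0_of_isGE_one h₃ hY φ, comp_zero]

lemma ge0₂ (T : Triangle C) (hT : T ∈ distTriang C) (h₁ : w.ge0 T.obj₁) (h₃ : w.ge0 T.obj₃) :
    w.ge0 T.obj₂ := by
  refine ge0_of_hom_eq_zero fun A hA f => ?_
  -- `Hom(A, -)` is exact at `T.obj₂⟦1⟧` in the twice rotated triangle
  obtain ⟨ψ, rfl⟩ := T.rotate.rotate.coyoneda_exact₃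
    (rot_of_distTriang _ (rot_of_distTriang _ hT)) f (w.orth hA h₃ _)
  have hψ : ψ = 0 := w.orth hA h₁ ψ
  rw [hψ]
  exact zero_comp

lemma isLE₂ (T : Triangle C) (hT : T ∈ distTriang C) (n : ℤ) (h₁ : w.IsLE T.obj₁ n)
    (h₃ : w.IsLE T.obj₃ n) : w.IsLE T.obj₂ n :=
  le0₂ _ (T.shift_distinguished hT (-n)) h₁ h₃

section Functor

variable {wC : WeightStructure C} {wD : WeightStructure D} (F : C ⥤ D) [F.CommShift ℤ]
  [F.IsTriangulated]
  (hheart : ∀ X : C, wC.le0 X → wC.ge0 X → wD.le0 (F.obj X) ∧ wD.ge0 (F.obj X))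
include hheart

lemma map_ge0_isLE_of_ge0_isLE (n : ℕ) {X : C} (hge : wC.ge0 X) (hle : wC.IsLE X n) :
    wD.ge0 (F.obj X) ∧ wD.IsLE (F.obj X) n := by
  induction n generalizing X with
  | zero =>
    rw [Nat.cast_zero, isLE_zero_iff] at hle ⊢
    exact (hheart X hle hge).symm
  | succ n ih =>
    obtain ⟨A, B, f, g, h, hA, hB, hT⟩ := wC.decomp X
    have hAge : wC.ge0 A := ge0₂ _ (inv_rot_of_distTriang _ hT) hB hge
    have hBle : wC.IsLE B (n + 1) := by
      refine isLE₂ _ (rot_of_distTriang _ hT) _ (by exact_mod_cast hle) ?_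
      exact (isLE_shift_iff A n 1 (n + 1) rfl).2
        (isLE_of_le ((isLE_zero_iff A).2 hA) n.cast_nonneg)
    obtain ⟨hFBge, hFBle⟩ := ih hB ((isLE_shift_iff B (n + 1) (-1) n (by ring)).2 hBle)
    obtain ⟨hFAle, hFAge⟩ := hheart A hA hAge
    have hFT := F.map_distinguished _ hT
    have e : F.obj (B⟦(-1 : ℤ)⟧) ≅ (F.obj B)⟦(-1 : ℤ)⟧ := (F.commShiftIso (-1 : ℤ)).app B
    refine ⟨ge0₂ _ hFT hFAge ?_, ?_⟩
    · rw [← isGE_zero_iff]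
      rw [← isGE_zero_iff, isGE_iff_of_iso_shift (n := 1) e (by ring)] at hFBge
      exact isGE_of_ge hFBge zero_le_one
    · rw [isLE_iff_of_iso_shift (n := n + 1) e (by ring)] at hFBle
      push_cast
      exact isLE₂ _ hFT _ (isLE_of_le ((isLE_zero_iff _).2 hFAle) (by positivity)) hFBle

lemma map_isGE_isLE_of_isGE_isLE {X : C} {a b : ℤ} (hab : a ≤ b) (hge : wC.IsGE X a)
    (hle : wC.IsLE X b) : wD.IsGE (F.obj X) a ∧ wD.IsLE (F.obj X) b := by
  obtain ⟨n, rfl⟩ : ∃ n : ℕ, b = a + n := ⟨(b - a).toNat, by omega⟩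
  obtain ⟨hFge, hFle⟩ := map_ge0_isLE_of_ge0_isLE F hheart n hge
    ((isLE_shift_iff X (a + n) (-a) n (by ring)).2 hle)
  have e : F.obj (X⟦-a⟧) ≅ (F.obj X)⟦-a⟧ := (F.commShiftIso (-a)).app X
  rw [← isGE_zero_iff, isGE_iff_of_iso_shift (n := a) e (by ring)] at hFge
  exact ⟨hFge, (isLE_iff_of_iso_shift (n := a + n) e (by ring)).1 hFle⟩

end Functor

end WeightStructure

open WeightStructure

/-- If `C` carries a *bounded* weight structure (every object lies in some `C_{w≥a} ∩ C_{w≤b}`)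
and `F : C ⥤ D` is an exact (triangulated) functor sending the heart of `C` into the heart
of `D`, then `F` is weight-exact: `F(C_{w≤0}) ⊆ D_{w≤0}` and `F(C_{w≥0}) ⊆ D_{w≥0}`. -/
theorem weight_exact_of_heart_to_heart (wC : WeightStructure C) (wD : WeightStructure D)
    (hbdd : ∀ X : C, ∃ a b : ℤ, a ≤ b ∧ wC.ge0 (X⟦(-a : ℤ)⟧) ∧ wC.le0 (X⟦(-b : ℤ)⟧))
    (F : C ⥤ D) [F.CommShift ℤ] [F.IsTriangulated]
    (hheart : ∀ X : C, wC.le0 X → wC.ge0 X → wD.le0 (F.obj X) ∧ wD.ge0 (F.obj X)) :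
    (∀ X : C, wC.le0 X → wD.le0 (F.obj X)) ∧ (∀ X : C, wC.ge0 X → wD.ge0 (F.obj X)) := by
  constructor
  · intro X hX
    obtain ⟨a, -, -, ha, -⟩ := hbdd X
    have hXa : wC.IsGE X (min a 0) := isGE_of_ge ha (min_le_left a 0)
    rw [← isLE_zero_iff] at hX ⊢
    exact (map_isGE_isLE_of_isGE_isLE F hheart (min_le_right a 0) hXa hX).2
  · intro X hX
    obtain ⟨-, b, -, -, hb⟩ := hbdd X
    have hXb : wC.IsLE X (max b 0) := isLE_of_le hb (le_max_left b 0)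
    rw [← isGE_zero_iff] at hX ⊢
    exact (map_isGE_isLE_of_isGE_isLE F hheart (le_max_right b 0) hX hXb).1
end

section
/- Let V be a finite-dimensional vector space over an algebraically closed field of characteristic 0, f : V → V an invertible linear map, and N : V → V a linear map with N∘f = p·(f∘N) for a scalar p that is not a root of unity and |p| ≠ 1 in some absolute value. Then N maps the generalized λ-eigenspace of f into the generalized (λ/p)-eigenspace of f. -/
/-- Let `V` be a finite-dimensional vector space over an algebraically closed field of
characteristic zero, `f` an invertible endomorphism and `N` an endomorphism satisfying
`N ∘ f = p • (f ∘ N)` for a scalar `p` which is not a root of unity and has `|p| ≠ 1`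
for some absolute value.  Then `N` maps the generalized `λ`-eigenspace
`ker((f - λ·id)^(dim V))` of `f` into the generalized `λ/p`-eigenspace. -/
theorem monodromy_maps_genEigenspace {k : Type*} [Field k] [IsAlgClosed k] [CharZero k]
    {V : Type*} [AddCommGroup V] [Module k V] [FiniteDimensional k V]
    (f N : Module.End k V) (hf : IsUnit f) (p : k)
    (hp_root : ∀ n : ℕ, 0 < n → p ^ n ≠ 1)
    (hp_abs : ∃ v : AbsoluteValue k ℝ, v p ≠ 1)
    (hcomm : N * f = p • (f * N)) (μ : k) (x : V)
    (hx : x ∈ LinearMap.ker ((f - μ • (1 : Module.End k V)) ^ Module.finrank k V)) :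
    N x ∈ LinearMap.ker ((f - (μ / p) • (1 : Module.End k V)) ^ Module.finrank k V) := by
  rcases eq_or_ne p 0 with hp0 | hp0
  · -- if p = 0 then N * f = 0, hence N = 0 since f is invertible
    subst hp0
    have h0 : N * f = 0 := by rw [hcomm, zero_smul]
    have hN : N = 0 := by
      have h1 : N * f * (↑hf.unit⁻¹ : Module.End k V) = 0 := by rw [h0, zero_mul]
      rwa [mul_assoc, hf.mul_val_inv, mul_one] at h1
    simp [hN]
  · -- main case: p ≠ 0
    rw [LinearMap.mem_ker] at hx ⊢
    have h1 : (f - (μ / p) • 1) * N = p⁻¹ • (N * (f - μ • (1 : Module.End k V))) := by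
      have hfN : f * N = p⁻¹ • (N * f) := by
        rw [hcomm, smul_smul, inv_mul_cancel₀ hp0, one_smul]
      rw [sub_mul, hfN, mul_sub, smul_sub]
      congr 1
      rw [smul_mul_assoc, one_mul, mul_smul_comm, mul_one, smul_smul,
        div_eq_mul_inv, mul_comm]
    have key : ∀ m : ℕ, ((f - (μ / p) • 1) ^ m) * N
        = (p⁻¹) ^ m • (N * (f - μ • (1 : Module.End k V)) ^ m) := by
      intro m
      induction m with
      | zero => simp
      | succ m ih =>
        rw [pow_succ, pow_succ, mul_assoc, h1, mul_smul_comm, ← mul_assoc, ih,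
          smul_mul_assoc, smul_smul, ← pow_succ', mul_assoc, ← pow_succ, pow_succ p⁻¹ m]
    have h2 := congrArg (fun g : Module.End k V => g (x)) (key (Module.finrank k V))
    simp only [Module.End.mul_apply, LinearMap.smul_apply] at h2
    rw [h2, hx]
    simp
end

section
/- Let C be a triangulated category admitting arbitrary small coproducts, and N a set of compact objects of C that is negative (Hom(X, Y[n]) = 0 for X, Y ∈ N, n ≥ 1). Let C_{w≥0} be the smallest class containing all N[i] for i ≥ 0 closed under coproducts and extensions. Then for every X ∈ N and every Y ∈ C_{w≥0}, Hom(X[−1], Y) = 0, i.e. every object of N[−1] lies in ^⊥(C_{w≥0}). -/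
open CategoryTheory Category Limits Pretriangulated DirectSum

universe v u

variable {C : Type u} [Category.{v} C] [Preadditive C] [HasZeroObject C] [HasShift C ℤ]
  [∀ n : ℤ, (shiftFunctor C n).Additive] [Pretriangulated C]

/-- An object `X` of a triangulated category with coproducts is compact if `Hom(X, -)`
commutes with coproducts: the canonical map `⊕_j Hom(X, Y j) → Hom(X, ∐ Y)` is
bijective for every small family `Y`. -/
def IsCompactObj (X : C) : Prop :=
  ∀ (J : Type v) (Y : J → C) (_ : HasCoproduct Y),
    letI : DecidableEq J := Classical.decEq J
    Function.Bijective
      (DirectSum.toAddMonoid (fun j : J =>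
        AddMonoidHom.mk' (fun g : X ⟶ Y j => g ≫ Sigma.ι Y j)
          (by intro g g'; simp [Preadditive.add_comp])) :
        (⨁ j : J, (X ⟶ Y j)) →+ (X ⟶ ∐ Y))

/-- The smallest class of objects containing `N[i]` for all `i ≥ 0` and closed under
(existing) small coproducts and extensions. -/
inductive BuiltFrom (N : Set C) : C → Prop
  | shift (X : C) (hX : X ∈ N) (i : ℤ) (hi : 0 ≤ i) : BuiltFrom N (X⟦i⟧)
  | coprod {J : Type v} (Y : J → C) (hY : HasCoproduct Y)
      (h : ∀ j : J, BuiltFrom N (Y j)) : BuiltFrom N (∐ Y)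
  | ext (T : Triangle C) (hT : T ∈ distTriang C) (h₁ : BuiltFrom N T.obj₁)
      (h₃ : BuiltFrom N T.obj₃) : BuiltFrom N T.obj₂

/-- The hom-equivalence coming from the shift adjunction. -/
noncomputable def shiftHomEquiv (n : ℤ) (A B : C) :
    (A⟦n⟧ ⟶ B) ≃ (A ⟶ B⟦(-n : ℤ)⟧) :=
  (shiftEquiv C n).toAdjunction.homEquiv A B

lemma shiftHomEquiv_zero (n : ℤ) (A B : C) : shiftHomEquiv n A B 0 = 0 := by
  unfold shiftHomEquiv; erw [Adjunction.homEquiv_unit]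
  show _ ≫ (shiftFunctor C (-n)).map 0 = 0
  simp
  exact comp_zero

lemma shiftHomEquiv_symm_zero (n : ℤ) (A B : C) : (shiftHomEquiv n A B).symm 0 = 0 := by
  unfold shiftHomEquiv; erw [Adjunction.homEquiv_counit]
  show (shiftFunctor C n).map 0 ≫ _ = 0
  simp
  exact zero_comp

lemma eq_zero_of_shiftHomEquiv_eq_zero {n : ℤ} {A B : C} (f : A⟦n⟧ ⟶ B)
    (h : shiftHomEquiv n A B f = 0) : f = 0 := by
  have := congrArg (shiftHomEquiv n A B).symm h
  rwa [Equiv.symm_apply_apply, shiftHomEquiv_symm_zero] at this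

lemma built_orthogonal [HasCoproducts.{v} C] (N : Set C)
    (hcompact : ∀ X ∈ N, IsCompactObj X)
    (hneg : ∀ X ∈ N, ∀ Y ∈ N, ∀ n : ℤ, 1 ≤ n → ∀ f : X ⟶ Y⟦n⟧, f = 0)
    (Y : C) (hY : BuiltFrom N Y) :
    ∀ X ∈ N, ∀ n : ℤ, n ≤ -1 → ∀ f : X⟦n⟧ ⟶ Y, f = 0 := by
  induction hY with
  | shift Z hZ i hi =>
    intro X hX n hn f
    apply eq_zero_of_shiftHomEquiv_eq_zero
    set g := shiftHomEquiv n X (Z⟦i⟧) with hg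
    have h1 : (1 : ℤ) ≤ i + -n := by omega
    have : g f ≫ ((shiftFunctorAdd C i (-n)).inv.app Z) = 0 :=
      hneg X hX Z hZ (i + -n) h1 _
    have := congrArg (fun t => t ≫ ((shiftFunctorAdd C i (-n)).hom.app Z)) this
    simpa using this
  | coprod Yf hcop h ih =>
    intro X hX n hn f
    apply eq_zero_of_shiftHomEquiv_eq_zero
    set g := shiftHomEquiv n X (∐ Yf) f with hg
    -- transfer through the iso (∐ Yf)⟦-n⟧ ≅ ∐ (fun j => (Yf j)⟦-n⟧)
    have hcop' : HasCoproduct (fun j => (Yf j)⟦(-n : ℤ)⟧) := inferInstance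
    obtain ⟨d, hd⟩ := (hcompact X hX _ (fun j => (Yf j)⟦(-n : ℤ)⟧) hcop').2
      (g ≫ inv (sigmaComparison (shiftFunctor C (-n)) Yf))
    have hdz : d = 0 := by
      refine DFinsupp.ext fun j => ?_
      have : (shiftHomEquiv n X (Yf j)).symm (d j) = 0 := ih j X hX n hn _
      have := congrArg (shiftHomEquiv n X (Yf j)) this
      rwa [Equiv.apply_symm_apply, shiftHomEquiv_zero] at this
    rw [hdz, map_zero] at hd
    have : g = 0 := by
      have := congrArg (fun t => t ≫ sigmaComparison (shiftFunctor C (-n)) Yf) hd.symm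
      simpa using this
    rw [this]
  | ext T hT h₁ h₃ ih₁ ih₃ =>
    intro X hX n hn f
    obtain ⟨g, hg⟩ := Triangle.coyoneda_exact₂ T hT f (ih₃ X hX n hn _)
    rw [hg, ih₁ X hX n hn g, zero_comp]

/-- Let `C` be a triangulated category admitting small coproducts and `N` a negative set
of compact objects (`Hom(X, Y[n]) = 0` for `X, Y ∈ N`, `n ≥ 1`).  If `C_{w≥0}` denotes
the smallest class containing the `N[i]`, `i ≥ 0`, closed under coproducts and
extensions, then `N[-1] ⊆ ^⊥(C_{w≥0})`: for every `X ∈ N` and every `Y` built from the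
`N[i]`, `i ≥ 0`, by coproducts and extensions, `Hom(X[-1], Y) = 0`. -/
theorem shift_neg_one_orthogonal [HasCoproducts.{v} C] (N : Set C)
    (hcompact : ∀ X ∈ N, IsCompactObj X)
    (hneg : ∀ X ∈ N, ∀ Y ∈ N, ∀ n : ℤ, 1 ≤ n → ∀ f : X ⟶ Y⟦n⟧, f = 0)
    (X : C) (hX : X ∈ N) (Y : C) (hY : BuiltFrom N Y)
    (f : X⟦(-1 : ℤ)⟧ ⟶ Y) : f = 0 :=
  built_orthogonal N hcompact hneg Y hY X hX (-1) le_rfl f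
end
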